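/- Let T be a symmetric (p+1)×(p+1) matrix and define [[1, zᵀ],[z, Z]] := A⁻¹ T (Aᵀ)⁻¹ where A = [[1, 0ᵀ],[−e, 2I]] (e the all-ones vector in ℝ^p, I the p×p identity). Then T ⪰ 0 with all diagonal entries Tᵢᵢ = 1 (i = 1,…,p+1) if and only if Z ⪰ zzᵀ and Zᵢᵢ = zᵢ for i = 1,…,p. -/

import Mathlib

/-!
Since `det A = 2 ^ p`, `A` is invertible and `T = A M Aᵀ` with `M = [[1, zᵀ], [z, Z]]`, so `T ⪰ 0`
iff `M ⪰ 0`, which by the Schur complement of the `(1,1)` entry is `Z ⪰ zzᵀ`. The congruence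
keeps `T₁₁ = M₁₁ = 1`, and the other diagonal entries are `1 - 4 zᵢ + 4 Zᵢᵢ`, which equal `1`
exactly when `Zᵢᵢ = zᵢ`.
-/

open Matrix Finset

/-- The congruence matrix `A = [[1, 0ᵀ],[−e, 2I]]`, indexed by `Fin 1 ⊕ Fin p`. -/
noncomputable def Amat (p : ℕ) : Matrix (Fin 1 ⊕ Fin p) (Fin 1 ⊕ Fin p) ℝ :=
  Matrix.fromBlocks 1 0 (Matrix.of fun _ _ => (-1 : ℝ)) ((2 : ℝ) • 1)

theorem det_Amat (p : ℕ) : (Amat p).det = 2 ^ p := by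
  simp [Amat, det_fromBlocks_zero₁₂]

theorem isUnit_Amat (p : ℕ) : IsUnit (Amat p) := by
  rw [isUnit_iff_isUnit_det, det_Amat]
  exact (pow_ne_zero p two_ne_zero).isUnit

theorem Amat_mul_mul_transpose_inl_inl {p : ℕ} (M : Matrix (Fin 1 ⊕ Fin p) (Fin 1 ⊕ Fin p) ℝ) :
    (Amat p * M * (Amat p)ᵀ) (.inl 0) (.inl 0) = M (.inl 0) (.inl 0) := by
  simp [mul_apply, Fintype.sum_sum_type, Amat, fromBlocks, one_apply]

theorem Amat_mul_mul_transpose_inr_inr {p : ℕ} (M : Matrix (Fin 1 ⊕ Fin p) (Fin 1 ⊕ Fin p) ℝ)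
    (i j : Fin p) :
    (Amat p * M * (Amat p)ᵀ) (.inr i) (.inr j) =
      M (.inl 0) (.inl 0) - 2 * M (.inl 0) (.inr j) - 2 * M (.inr i) (.inl 0)
        + 4 * M (.inr i) (.inr j) := by
  simp only [Amat, fromBlocks, mul_apply, of_apply, Sum.elim_inr, Fintype.sum_sum_type, univ_unique,
    Fin.default_eq_zero, Sum.elim_inl, neg_mul, one_mul, sum_neg_distrib, sum_singleton,
    Matrix.smul_apply, one_apply, smul_eq_mul, mul_ite, mul_one, mul_zero, ite_mul, zero_mul,
    sum_ite_eq, mem_univ, ↓reduceIte, transpose_apply, mul_neg, neg_add_rev, neg_neg]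
  ring

theorem posSemidef_fromBlocks_one_iff {n : Type*} [Fintype n] (z : n → ℝ) (Z : Matrix n n ℝ) :
    (fromBlocks (of fun _ _ => (1 : ℝ)) (of fun (_ : Fin 1) j => z j)
        (of fun i (_ : Fin 1) => z i) Z).PosSemidef ↔ (Z - vecMulVec z z).PosSemidef := by
  have hone : (of fun _ _ => (1 : ℝ)) = (1 : Matrix (Fin 1) (Fin 1) ℝ) := by
    ext i j
    fin_cases i; fin_cases j; rfl
  have hcol : (of fun i (_ : Fin 1) => z i) = (of fun (_ : Fin 1) j => z j)ᴴ := by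
    ext i j; simp
  have hschur : (of fun (_ : Fin 1) j => z j)ᴴ * (1 : Matrix (Fin 1) (Fin 1) ℝ)⁻¹ *
      of (fun (_ : Fin 1) j => z j) = vecMulVec z z := by
    ext i j; simp [mul_apply, vecMulVec_apply]
  let : Invertible (1 : Matrix (Fin 1) (Fin 1) ℝ) := invertibleOne
  rw [hone, hcol, PosDef.fromBlocks₁₁ _ _ PosDef.one, hschur]

theorem stmt19_general (p : ℕ) (T : Matrix (Fin 1 ⊕ Fin p) (Fin 1 ⊕ Fin p) ℝ)
    (z : Fin p → ℝ) (Z : Matrix (Fin p) (Fin p) ℝ)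
    (hdef : Matrix.fromBlocks (Matrix.of fun _ _ => (1 : ℝ))
        (Matrix.of fun (_ : Fin 1) j => z j) (Matrix.of fun i (_ : Fin 1) => z i) Z
      = (Amat p)⁻¹ * T * ((Amat p)ᵀ)⁻¹) :
    (T.PosSemidef ∧ ∀ i, T i i = 1)
      ↔ ((Z - Matrix.vecMulVec z z).PosSemidef ∧ ∀ i, Z i i = z i) := by
  set M := fromBlocks (of fun _ _ => (1 : ℝ)) (of fun (_ : Fin 1) j => z j)
    (of fun i (_ : Fin 1) => z i) Z
  have hA := isUnit_Amat p
  have hdet : IsUnit (Amat p).det := (isUnit_iff_isUnit_det _).mp hA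
  have hTM : T = Amat p * M * (Amat p)ᵀ := by
    rw [hdef, ← mul_assoc, ← mul_assoc, mul_nonsing_inv _ hdet, one_mul, mul_assoc,
      nonsing_inv_mul _ (by rwa [det_transpose]), mul_one]
  have hpsd : T.PosSemidef ↔ (Z - vecMulVec z z).PosSemidef := by
    rw [hTM, ← conjTranspose_eq_transpose_of_trivial, ← star_eq_conjTranspose,
      hA.posSemidef_star_right_conjugate_iff, posSemidef_fromBlocks_one_iff]
  have hT₀ : T (.inl 0) (.inl 0) = 1 := by
    rw [hTM, Amat_mul_mul_transpose_inl_inl]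
    rfl
  have hTᵢ (i : Fin p) : T (.inr i) (.inr i) = 1 - 4 * z i + 4 * Z i i := by
    rw [hTM, Amat_mul_mul_transpose_inr_inr]
    simp only [M, fromBlocks_apply₁₁, fromBlocks_apply₁₂, fromBlocks_apply₂₁, fromBlocks_apply₂₂,
      of_apply]
    ring
  have hdiag : (∀ i, T i i = 1) ↔ ∀ i, Z i i = z i := by
    simp only [Sum.forall, Fin.forall_fin_one, hT₀, hTᵢ, true_and]
    exact forall_congr' fun i => by constructor <;> intro h <;> linarith
  rw [hpsd, hdiag]

/-- with `[[1, zᵀ],[z, Z]] = A⁻¹ T (Aᵀ)⁻¹`, one has `T ⪰ 0` with unit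
diagonal iff `Z ⪰ zzᵀ` and `Zᵢᵢ = zᵢ` for all `i`. -/
theorem stmt19 (p : ℕ) (T : Matrix (Fin 1 ⊕ Fin p) (Fin 1 ⊕ Fin p) ℝ)
    (hT : T.IsSymm) (z : Fin p → ℝ) (Z : Matrix (Fin p) (Fin p) ℝ)
    (hdef : Matrix.fromBlocks (Matrix.of fun _ _ => (1 : ℝ))
        (Matrix.of fun (_ : Fin 1) j => z j) (Matrix.of fun i (_ : Fin 1) => z i) Z
      = (Amat p)⁻¹ * T * ((Amat p)ᵀ)⁻¹) :
    (T.PosSemidef ∧ ∀ i, T i i = 1)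
      ↔ ((Z - Matrix.vecMulVec z z).PosSemidef ∧ ∀ i, Z i i = z i) :=
  stmt19_general p T z Z hdef
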